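/- Hop bound suffices: for all vertices s, t in a finite vertex type V, the set of minimal elements (with respect to the product order on Fin k → ℝ≥0) of the costs of all walks from s to t equals the set of minimal elements of the costs of walks from s to t with at most (card V) − 1 edges. In particular no Pareto optimal multi-cost requires a walk with more than (card V) − 1 edges. -/

import Mathlib

open scoped NNReal

/-- A walk from `s` to `t`: a nonempty list of vertices starting at `s`,
ending at `t`, with `E u v` for every pair of consecutive vertices. -/
def IsWalk {V : Type*} (E : V → V → Prop) (s t : V) (l : List V) : Prop :=
  l ≠ [] ∧ l.head? = some s ∧ l.getLast? = some t ∧ l.Chain' E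

/-- The multi-cost of a walk: componentwise sum of edge weights over
consecutive pairs of vertices (a walk with no edges has cost `0`). -/
def walkCost {V : Type*} {k : ℕ} (w : V → V → Fin k → ℝ≥0) (l : List V) :
    Fin k → ℝ≥0 :=
  ((l.zip l.tail).map fun p => w p.1 p.2).sum

/-- The Pareto front: minimal elements of `S` w.r.t. the product order. -/
def paretoFront {k : ℕ} (S : Set (Fin k → ℝ≥0)) : Set (Fin k → ℝ≥0) :=
  {m | m ∈ S ∧ ¬ ∃ c ∈ S, c < m}

/-! Cutting the closed subwalk between two visits of the same vertex yields a walk with the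
same endpoints and, weights being nonnegative, no larger cost. Repeating this, every walk is
dominated by a walk without repeated vertices, hence with at most `card V` vertices; and a
subset that dominates every element of a set has the same minimal elements as the set. -/

theorem List.Duplicate.exists_eq_append {α : Type*} {x : α} {l : List α}
    (h : List.Duplicate x l) : ∃ A B C : List α, l = A ++ x :: (B ++ x :: C) := by
  induction h with
  | cons_mem hx =>
    obtain ⟨B, C, rfl⟩ := List.append_of_mem hx
    exact ⟨[], B, C, rfl⟩
  | cons_duplicate _ ih =>
    obtain ⟨A, B, C, rfl⟩ := ih
    exact ⟨_ :: A, B, C, rfl⟩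

section Walks

variable {V : Type*} {k : ℕ} (w : V → V → Fin k → ℝ≥0)

lemma walkCost_cons_cons (a b : V) (l : List V) :
    walkCost w (a :: b :: l) = w a b + walkCost w (b :: l) := by
  simp [walkCost]

lemma walkCost_append_cons :
    ∀ (l₁ : List V) (v : V) (l₂ : List V),
      walkCost w (l₁ ++ v :: l₂) = walkCost w (l₁ ++ [v]) + walkCost w (v :: l₂)
  | [], v, l₂ => by simp [walkCost]
  | [a], v, l₂ => by simp [walkCost]
  | a :: b :: l₁, v, l₂ => by
      simp only [List.cons_append, walkCost_cons_cons]
      rw [← List.cons_append, walkCost_append_cons (b :: l₁) v l₂, add_assoc]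
      rfl

lemma walkCost_skip_cycle_le (A B C : List V) (a : V) :
    walkCost w (A ++ a :: C) ≤ walkCost w (A ++ a :: (B ++ a :: C)) := by
  rw [walkCost_append_cons w A a C, walkCost_append_cons w A a (B ++ a :: C),
    ← List.cons_append, walkCost_append_cons w (a :: B) a C]
  exact add_le_add le_rfl le_add_self

variable {E : V → V → Prop} {s t : V}

lemma IsWalk.skip_cycle {A B C : List V} {a : V}
    (h : IsWalk E s t (A ++ a :: (B ++ a :: C))) : IsWalk E s t (A ++ a :: C) := by
  obtain ⟨-, hs, ht, hE⟩ := h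
  refine ⟨by simp, ?_, ?_, ?_⟩
  · cases A <;> simp_all
  · rw [← List.cons_append, ← List.append_assoc, List.getLast?_append_cons] at ht
    rwa [List.getLast?_append_cons]
  · have hpre : List.IsChain E (A ++ [a]) := hE.prefix ⟨B ++ a :: C, by simp⟩
    have hsuf : List.IsChain E ([a] ++ C) := hE.suffix ⟨A ++ a :: B, by simp⟩
    have hskip := hpre.append_overlap hsuf (List.cons_ne_nil _ _)
    simp only [List.append_assoc, List.singleton_append] at hskip
    exact hskip

theorem IsWalk.exists_nodup_walkCost_le {Q : List V} (hQ : IsWalk E s t Q) :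
    ∃ Q', IsWalk E s t Q' ∧ Q'.Nodup ∧ walkCost w Q' ≤ walkCost w Q := by
  by_cases hnd : Q.Nodup
  · exact ⟨Q, hQ, hnd, le_rfl⟩
  obtain ⟨a, hdup⟩ := List.exists_duplicate_iff_not_nodup.2 hnd
  obtain ⟨A, B, C, rfl⟩ := hdup.exists_eq_append
  obtain ⟨Q', hQ', hnd', hle⟩ := hQ.skip_cycle.exists_nodup_walkCost_le
  exact ⟨Q', hQ', hnd', hle.trans (walkCost_skip_cycle_le w A B C a)⟩
termination_by Q.length
decreasing_by subst_vars; simp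

end Walks

lemma paretoFront_eq_of_subset_of_forall_le {k : ℕ} {S T : Set (Fin k → ℝ≥0)}
    (hTS : T ⊆ S) (hle : ∀ c ∈ S, ∃ d ∈ T, d ≤ c) : paretoFront S = paretoFront T := by
  ext m
  constructor
  · rintro ⟨hmS, hmin⟩
    obtain ⟨d, hdT, hdm⟩ := hle m hmS
    obtain rfl : d = m := by_contra fun hne => hmin ⟨d, hTS hdT, hdm.lt_of_ne hne⟩
    exact ⟨hdT, fun ⟨c, hcT, hcm⟩ => hmin ⟨c, hTS hcT, hcm⟩⟩
  · rintro ⟨hmT, hmin⟩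
    refine ⟨hTS hmT, fun ⟨c, hcS, hcm⟩ => ?_⟩
    obtain ⟨d, hdT, hdc⟩ := hle c hcS
    exact hmin ⟨d, hdT, hdc.trans_lt hcm⟩

theorem paretoFront_hop_bound_general {V : Type*} [Fintype V]
    (E : V → V → Prop) {k : ℕ} (w : V → V → Fin k → ℝ≥0)
    (s t : V) :
    paretoFront {c | ∃ Q : List V, IsWalk E s t Q ∧ walkCost w Q = c} =
    paretoFront {c | ∃ Q : List V, IsWalk E s t Q ∧
      Q.length - 1 ≤ Fintype.card V - 1 ∧ walkCost w Q = c} := by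
  refine paretoFront_eq_of_subset_of_forall_le ?_ ?_
  · rintro _ ⟨Q, hQ, -, rfl⟩
    exact ⟨Q, hQ, rfl⟩
  · rintro _ ⟨Q, hQ, rfl⟩
    obtain ⟨Q', hQ', hnd, hle⟩ := hQ.exists_nodup_walkCost_le w
    exact ⟨_, ⟨Q', hQ', Nat.sub_le_sub_right hnd.length_le_card 1, rfl⟩, hle⟩

/-- hop bound suffices: the Pareto front of the costs of all
walks from `s` to `t` equals the Pareto front of the costs of walks from
`s` to `t` with at most `card V - 1` edges. -/
theorem paretoFront_hop_bound {V : Type*} [Fintype V]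
    (E : V → V → Prop) [DecidableRel E] {k : ℕ} (w : V → V → Fin k → ℝ≥0)
    (s t : V) :
    paretoFront {c | ∃ Q : List V, IsWalk E s t Q ∧ walkCost w Q = c} =
    paretoFront {c | ∃ Q : List V, IsWalk E s t Q ∧
      Q.length - 1 ≤ Fintype.card V - 1 ∧ walkCost w Q = c} :=
  paretoFront_hop_bound_general E w s t
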